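/- arXiv:2007.00096 — 5 statements merged into one kernel-verified Lean document; each statement's English description precedes it below -/
import Mathlib

section
/- Let N ≥ 2 be an integer and let ν = (ν_1,…,ν_N) ∈ ℕ^N satisfy ∑_{i=1}^N ν_i = N. Then c_N² ≤ (N/(N−1)) · D_N, where c_N and D_N are the pair merger rate and multiple-merger bound formed from ν. -/
open Finset

/-- For offspring counts `ν : Fin N → ℕ` summing to `N` (with `N ≥ 2`),
the pair merger rate `c_N` and multiple-merger bound `D_N` satisfy
`c_N ^ 2 ≤ (N / (N - 1)) * D_N`. -/
theorem cN_sq_le_DN (N : ℕ) (hN : 2 ≤ N) (ν : Fin N → ℕ)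
    (hsum : ∑ i, ν i = N) :
    ((1 / ((N : ℝ) * (N - 1))) * ∑ i, (ν i : ℝ) * ((ν i : ℝ) - 1)) ^ 2 ≤
      ((N : ℝ) / (N - 1)) *
        ((1 / ((N : ℝ) ^ 2 * (N - 1))) * ∑ i, (ν i : ℝ) * ((ν i : ℝ) - 1) *
          ((ν i : ℝ) + (1 / (N : ℝ)) * ∑ j ∈ univ.erase i, (ν j : ℝ) ^ 2)) := by
  have hn2 : (2 : ℝ) ≤ N := by exact_mod_cast hN
  have hn0 : (0 : ℝ) < N := by linarith
  have hn1 : (0 : ℝ) < (N : ℝ) - 1 := by linarith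
  set S : ℝ := ∑ i, (ν i : ℝ) * ((ν i : ℝ) - 1) with hS
  set R : ℝ := ∑ i, (ν i : ℝ) * ((ν i : ℝ) - 1) *
      ((ν i : ℝ) + (1 / (N : ℝ)) * ∑ j ∈ univ.erase i, (ν j : ℝ) ^ 2) with hR
  -- Cauchy-Schwarz step
  have cauchy : S ^ 2 ≤ (N : ℝ) * ∑ i, (ν i : ℝ) * ((ν i : ℝ) - 1) ^ 2 := by
    have h := sum_mul_sq_le_sq_mul_sq univ (fun i => Real.sqrt (ν i))
      (fun i => Real.sqrt (ν i) * ((ν i : ℝ) - 1))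
    have e1 : ∀ i : Fin N, Real.sqrt (ν i) * (Real.sqrt (ν i) * ((ν i : ℝ) - 1))
        = (ν i : ℝ) * ((ν i : ℝ) - 1) := by
      intro i
      rw [← mul_assoc, Real.mul_self_sqrt (Nat.cast_nonneg _)]
    have e2 : ∀ i : Fin N, (Real.sqrt (ν i)) ^ 2 = (ν i : ℝ) := fun i =>
      Real.sq_sqrt (Nat.cast_nonneg _)
    have e3 : ∀ i : Fin N, (Real.sqrt (ν i) * ((ν i : ℝ) - 1)) ^ 2
        = (ν i : ℝ) * ((ν i : ℝ) - 1) ^ 2 := by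
      intro i
      rw [mul_pow, Real.sq_sqrt (Nat.cast_nonneg _)]
    simp only [e1, e2, e3] at h
    have hsum' : (∑ i, ((ν i : ℝ))) = (N : ℝ) := by exact_mod_cast hsum
    rwa [hsum'] at h
  -- termwise step
  have key : (N : ℝ) * ∑ i, (ν i : ℝ) * ((ν i : ℝ) - 1) ^ 2 ≤ (N : ℝ) * R := by
    rw [hR, mul_sum, mul_sum]
    refine sum_le_sum fun i _ => ?_
    have hT : (0 : ℝ) ≤ ∑ j ∈ univ.erase i, (ν j : ℝ) ^ 2 :=
      sum_nonneg fun j _ => sq_nonneg _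
    have hnn : (0 : ℝ) ≤ (ν i : ℝ) * ((ν i : ℝ) - 1) := by
      rcases Nat.eq_zero_or_pos (ν i) with h | h
      · simp [h]
      · have : (1 : ℝ) ≤ (ν i : ℝ) := by exact_mod_cast h
        nlinarith
    have h1 : (N : ℝ) * ((ν i : ℝ) - 1) ≤
        (N : ℝ) * ((ν i : ℝ) + (1 / (N : ℝ)) * ∑ j ∈ univ.erase i, (ν j : ℝ) ^ 2) := by
      have : (1 / (N : ℝ)) * ∑ j ∈ univ.erase i, (ν j : ℝ) ^ 2 ≥ 0 := by positivity
      nlinarith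
    calc (N : ℝ) * ((ν i : ℝ) * ((ν i : ℝ) - 1) ^ 2)
        = ((ν i : ℝ) * ((ν i : ℝ) - 1)) * ((N : ℝ) * ((ν i : ℝ) - 1)) := by ring
      _ ≤ ((ν i : ℝ) * ((ν i : ℝ) - 1)) *
          ((N : ℝ) * ((ν i : ℝ) + (1 / (N : ℝ)) * ∑ j ∈ univ.erase i, (ν j : ℝ) ^ 2)) :=
          mul_le_mul_of_nonneg_left h1 hnn
      _ = (N : ℝ) * ((ν i : ℝ) * ((ν i : ℝ) - 1) *
          ((ν i : ℝ) + (1 / (N : ℝ)) * ∑ j ∈ univ.erase i, (ν j : ℝ) ^ 2)) := by ring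
  have hSR : S ^ 2 ≤ (N : ℝ) * R := le_trans cauchy key
  have hne : (N : ℝ) ≠ 0 := ne_of_gt hn0
  have hne1 : (N : ℝ) - 1 ≠ 0 := ne_of_gt hn1
  have lhs_eq : (1 / ((N : ℝ) * ((N : ℝ) - 1)) * S) ^ 2
      = S ^ 2 / (((N : ℝ) * ((N : ℝ) - 1)) ^ 2) := by
    field_simp
  have rhs_eq : (N : ℝ) / ((N : ℝ) - 1) * (1 / ((N : ℝ) ^ 2 * ((N : ℝ) - 1)) * R)
      = ((N : ℝ) * R) / (((N : ℝ) * ((N : ℝ) - 1)) ^ 2) := by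
    rw [one_div, inv_mul_eq_div, div_mul_div_comm]
    rw [div_eq_div_iff (by positivity) (by positivity)]
    ring
  rw [lhs_eq, rhs_eq]
  exact div_le_div_of_nonneg_right hSR (by positivity)
end

section
/- For each integer N ≥ 3, let ν^N = (ν^N_1,…,ν^N_N) be ℕ-valued random variables on a probability space with ∑_{i=1}^N ν^N_i = N almost surely, and let G_N be a sub-σ-algebra of the underlying σ-algebra. Suppose there is a deterministic sequence (b_N) with b_N → 0 such that for every N, almost surely (1/(N(N−1)(N−2))) ∑_{i=1}^N E[(ν^N_i)_3 | G_N] ≤ b_N · (1/(N(N−1))) ∑_{i=1}^N E[(ν^N_i)_2 | G_N]. Then E[c_N] = (1/(N(N−1))) ∑_{i=1}^N E[(ν^N_i)_2] → 0 as N → ∞. -/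
/-!
Write `A = ∑ᵢ E[(νᵢ)₂]` and `B = ∑ᵢ E[(νᵢ)₃]`. Taking expectations in the moment condition gives
`B ≤ β A` with `β = |b_N| (N - 2)`. On the other hand, for every `t ≥ 0` and `n ∈ ℕ`,
`t (n)₂ ≤ (n)₃ + t (t + 1) n`; summing over `i` and using `∑ᵢ νᵢ = N` gives
`t A ≤ B + t (t + 1) N`. With `t = 2β + 1` the two bounds combine to `A ≤ 2 (2β + 1) N`, so
`E[c_N] = A / (N (N - 1)) ≤ 4 |b_N| + 2 / (N - 1) → 0`.
-/

open MeasureTheory Finset Filter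

lemma natCast_mul_natCast_sub_one_nonneg (n : ℕ) : 0 ≤ (n : ℝ) * (n - 1) := by
  rcases n with _ | n
  · simp
  · push_cast
    rw [add_sub_cancel_right]
    positivity

lemma mul_natCast_mul_sub_one_le {t : ℝ} (ht : 0 ≤ t) (n : ℕ) :
    t * ((n : ℝ) * (n - 1)) ≤ (n : ℝ) * (n - 1) * (n - 2) + t * (t + 1) * n := by
  rcases n with _ | _ | n
  · simp
  · simpa using mul_nonneg ht (by linarith : 0 ≤ t + 1)
  · push_cast
    -- after dividing by `n + 2` this is `0 ≤ (n - t)² + t n + n`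
    have hn : (0 : ℝ) ≤ n := n.cast_nonneg
    nlinarith [mul_nonneg (by positivity : (0 : ℝ) ≤ n + 2)
      (add_nonneg (add_nonneg (sq_nonneg ((n : ℝ) - t)) (mul_nonneg ht hn)) hn)]

lemma mul_sum_mul_sub_one_le {ι : Type*} [Fintype ι] {t : ℝ} (ht : 0 ≤ t) (x : ι → ℕ) :
    t * ∑ i, (x i : ℝ) * (x i - 1) ≤
      ∑ i, (x i : ℝ) * (x i - 1) * (x i - 2) + t * (t + 1) * ∑ i, (x i : ℝ) := by
  rw [mul_sum, mul_sum, ← sum_add_distrib]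
  exact sum_le_sum fun i _ => mul_natCast_mul_sub_one_le ht (x i)

section Probability

variable {Ω ι : Type*} [Fintype ι] {mΩ : MeasurableSpace Ω} {μ : Measure Ω}

lemma integrable_comp_of_ae_le [IsFiniteMeasure μ] (f : ℕ → ℝ) {X : Ω → ℕ} (hX : Measurable X)
    {N : ℕ} (hle : ∀ᵐ ω ∂μ, X ω ≤ N) : Integrable (fun ω => f (X ω)) μ := by
  refine .of_bound (measurable_from_nat.comp hX).aestronglyMeasurable
    (∑ k ∈ range (N + 1), ‖f k‖) ?_
  filter_upwards [hle] with ω hω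
  exact single_le_sum (f := fun k => ‖f k‖) (fun _ _ => norm_nonneg _)
    (mem_range.2 (Nat.lt_succ_of_le hω))

lemma sum_integral_le_of_ae_sum_condExp_le [IsFiniteMeasure μ]
    {m : MeasurableSpace Ω} (hm : m ≤ mΩ) (f g : ι → Ω → ℝ) (c d : ℝ)
    (h : ∀ᵐ ω ∂μ, c * ∑ i, μ[f i | m] ω ≤ d * ∑ i, μ[g i | m] ω) :
    c * ∑ i, ∫ ω, f i ω ∂μ ≤ d * ∑ i, ∫ ω, g i ω ∂μ := by
  have hint := integral_mono_ae
    ((integrable_finsetSum univ fun i _ => integrable_condExp).const_mul c)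
    ((integrable_finsetSum univ fun i _ => integrable_condExp).const_mul d) h
  simpa only [integral_const_mul, integral_finsetSum univ fun i _ => integrable_condExp,
    integral_condExp hm] using hint

variable {ν : ι → Ω → ℕ} {N : ℕ}

lemma ae_le_of_ae_sum_eq (hsum : ∀ᵐ ω ∂μ, ∑ i, ν i ω = N) (i : ι) : ∀ᵐ ω ∂μ, ν i ω ≤ N := by
  filter_upwards [hsum] with ω hω
  exact hω ▸ single_le_sum (f := fun j => ν j ω) (fun _ _ => Nat.zero_le _) (mem_univ i)

variable [IsProbabilityMeasure μ]

lemma mul_sum_integral_mul_sub_one_le (hν : ∀ i, Measurable (ν i))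
    (hsum : ∀ᵐ ω ∂μ, ∑ i, ν i ω = N) {t : ℝ} (ht : 0 ≤ t) :
    t * ∑ i, ∫ ω, (ν i ω : ℝ) * (ν i ω - 1) ∂μ ≤
      ∑ i, ∫ ω, (ν i ω : ℝ) * (ν i ω - 1) * (ν i ω - 2) ∂μ + t * (t + 1) * N := by
  have h₂ (i : ι) : Integrable (fun ω => (ν i ω : ℝ) * (ν i ω - 1)) μ :=
    integrable_comp_of_ae_le (fun n => (n : ℝ) * (n - 1)) (hν i) (ae_le_of_ae_sum_eq hsum i)
  have h₃ (i : ι) : Integrable (fun ω => (ν i ω : ℝ) * (ν i ω - 1) * (ν i ω - 2)) μ :=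
    integrable_comp_of_ae_le (fun n => (n : ℝ) * (n - 1) * (n - 2)) (hν i)
      (ae_le_of_ae_sum_eq hsum i)
  have hpt : ∀ᵐ ω ∂μ, t * ∑ i, (ν i ω : ℝ) * (ν i ω - 1) ≤
      ∑ i, (ν i ω : ℝ) * (ν i ω - 1) * (ν i ω - 2) + t * (t + 1) * N := by
    filter_upwards [hsum] with ω hω
    simpa only [← hω, Nat.cast_sum] using mul_sum_mul_sub_one_le ht (ν · ω)
  have := integral_mono_ae ((integrable_finsetSum univ fun i _ => h₂ i).const_mul t)
    ((integrable_finsetSum univ fun i _ => h₃ i).add (integrable_const _)) hpt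
  rwa [integral_const_mul, integral_finsetSum univ fun i _ => h₂ i,
    integral_add' (integrable_finsetSum univ fun i _ => h₃ i) (integrable_const _),
    integral_finsetSum univ fun i _ => h₃ i, integral_const, probReal_univ, one_smul] at this

variable {b : ℝ}

lemma sum_integral_mul_sub_one_mul_sub_two_le (hN : 3 ≤ N) {m : MeasurableSpace Ω}
    (hm : m ≤ mΩ)
    (hmom : ∀ᵐ ω ∂μ,
      (1 / ((N : ℝ) * (N - 1) * (N - 2))) *
          ∑ i, μ[fun ω' => (ν i ω' : ℝ) * (ν i ω' - 1) * (ν i ω' - 2) | m] ω ≤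
        b * ((1 / ((N : ℝ) * (N - 1))) * ∑ i, μ[fun ω' => (ν i ω' : ℝ) * (ν i ω' - 1) | m] ω)) :
    ∑ i, ∫ ω, (ν i ω : ℝ) * (ν i ω - 1) * (ν i ω - 2) ∂μ ≤
      |b| * (N - 2) * ∑ i, ∫ ω, (ν i ω : ℝ) * (ν i ω - 1) ∂μ := by
  set A := ∑ i, ∫ ω, (ν i ω : ℝ) * (ν i ω - 1) ∂μ
  set B := ∑ i, ∫ ω, (ν i ω : ℝ) * (ν i ω - 1) * (ν i ω - 2) ∂μ
  have hN' : (3 : ℝ) ≤ N := by exact_mod_cast hN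
  have h₁ : (0 : ℝ) < N - 1 := by linarith
  have h₂ : (0 : ℝ) < N - 2 := by linarith
  have hA : 0 ≤ A := sum_nonneg fun i _ =>
    integral_nonneg fun ω => natCast_mul_natCast_sub_one_nonneg _
  have h := sum_integral_le_of_ae_sum_condExp_le hm _ _ _ _
    (by simpa only [← mul_assoc] using hmom)
  calc B = (N * (N - 1) * (N - 2)) * (1 / ((N : ℝ) * (N - 1) * (N - 2)) * B) := by
        field_simp
    _ ≤ (N * (N - 1) * (N - 2)) * (b * (1 / ((N : ℝ) * (N - 1))) * A) := by
        gcongr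
    _ = b * (N - 2) * A := by
        field_simp
    _ ≤ |b| * (N - 2) * A := by
        gcongr
        exact le_abs_self b

lemma expected_pair_merger_rate_le (hν : ∀ i, Measurable (ν i)) (hN : 3 ≤ N)
    (hsum : ∀ᵐ ω ∂μ, ∑ i, ν i ω = N) {m : MeasurableSpace Ω} (hm : m ≤ mΩ)
    (hmom : ∀ᵐ ω ∂μ,
      (1 / ((N : ℝ) * (N - 1) * (N - 2))) *
          ∑ i, μ[fun ω' => (ν i ω' : ℝ) * (ν i ω' - 1) * (ν i ω' - 2) | m] ω ≤
        b * ((1 / ((N : ℝ) * (N - 1))) * ∑ i, μ[fun ω' => (ν i ω' : ℝ) * (ν i ω' - 1) | m] ω)) :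
    (1 / ((N : ℝ) * (N - 1))) * ∑ i, ∫ ω, (ν i ω : ℝ) * (ν i ω - 1) ∂μ ≤
      4 * |b| + 2 / (N - 1) := by
  set A := ∑ i, ∫ ω, (ν i ω : ℝ) * (ν i ω - 1) ∂μ
  have hN' : (3 : ℝ) ≤ N := by exact_mod_cast hN
  have h₁ : (0 : ℝ) < N - 1 := by linarith
  set β := |b| * (N - 2)
  have hβ : 0 ≤ β := mul_nonneg (abs_nonneg b) (by linarith)
  have hBA := sum_integral_mul_sub_one_mul_sub_two_le hN hm hmom
  have hAB := mul_sum_integral_mul_sub_one_le hν hsum (t := 2 * β + 1) (by positivity)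
  have hA_le : A ≤ 2 * (2 * β + 1) * N := by
    refine le_of_mul_le_mul_left (a := β + 1) ?_ (by positivity)
    linarith
  calc 1 / ((N : ℝ) * (N - 1)) * A ≤ 1 / ((N : ℝ) * (N - 1)) * (2 * (2 * β + 1) * N) := by
        gcongr
    _ = (4 * |b| * (N - 2) + 2) / (N - 1) := by
        field_simp
        ring
    _ ≤ (4 * |b| * (N - 1) + 2) / (N - 1) := by
        gcongr
        linarith
    _ = 4 * |b| + 2 / (N - 1) := by
        field_simp

end Probability

/-- **Lemma 2 of the paper.** If the conditional third falling factorial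
moments are dominated by `b_N` times the conditional second falling factorial moments,
with `b_N → 0`, then the expected pair merger rate `E[c_N] → 0` as `N → ∞`. -/
theorem expected_cN_tendsto_zero
    (Ω : ℕ → Type*) (mΩ : ∀ N, MeasurableSpace (Ω N))
    (P : ∀ N, Measure (Ω N)) (hP : ∀ N, IsProbabilityMeasure (P N))
    (ν : ∀ N, Fin N → Ω N → ℕ) (hmeas : ∀ N i, Measurable (ν N i))
    (G : ∀ N, MeasurableSpace (Ω N)) (hG : ∀ N, G N ≤ mΩ N)
    (hsum : ∀ N : ℕ, 3 ≤ N → ∀ᵐ ω ∂(P N), ∑ i, ν N i ω = N)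
    (b : ℕ → ℝ) (hb : Tendsto b atTop (nhds 0))
    (hmom : ∀ N : ℕ, 3 ≤ N → ∀ᵐ ω ∂(P N),
      (1 / ((N : ℝ) * (N - 1) * (N - 2))) *
          ∑ i, condExp (G N) (P N)
            (fun ω' => (ν N i ω' : ℝ) * ((ν N i ω' : ℝ) - 1) * ((ν N i ω' : ℝ) - 2)) ω ≤
        b N * ((1 / ((N : ℝ) * (N - 1))) *
          ∑ i, condExp (G N) (P N)
            (fun ω' => (ν N i ω' : ℝ) * ((ν N i ω' : ℝ) - 1)) ω)) :
    Tendsto (fun N : ℕ =>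
        (1 / ((N : ℝ) * (N - 1))) *
          ∑ i, ∫ ω, (ν N i ω : ℝ) * ((ν N i ω : ℝ) - 1) ∂(P N))
      atTop (nhds 0) := by
  have hbound : Tendsto (fun N : ℕ => 4 * |b N| + 2 / ((N : ℝ) - 1)) atTop (nhds 0) := by
    have hinv : Tendsto (fun N : ℕ => 2 / ((N : ℝ) - 1)) atTop (nhds 0) :=
      (tendsto_atTop_add_const_right atTop (-1) tendsto_natCast_atTop_atTop).const_div_atTop 2
    simpa using (hb.abs.const_mul 4).add hinv
  refine tendsto_of_tendsto_of_tendsto_of_le_of_le' tendsto_const_nhds hbound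
    (.of_forall fun N => ?_) ?_
  · exact mul_nonneg (one_div_nonneg.2 (natCast_mul_natCast_sub_one_nonneg N))
      (sum_nonneg fun i _ => integral_nonneg fun ω => natCast_mul_natCast_sub_one_nonneg _)
  · filter_upwards [eventually_ge_atTop 3] with N hN
    have := hP N
    exact expected_pair_merger_rate_le (hmeas N) hN (hsum N hN) (hG N) (hmom N hN)
end

section
/- Let N ≥ 1, m ≥ 3 and 1 ≤ k ≤ m−2 be integers, let ν = (ν_1,…,ν_N) ∈ ℕ^N satisfy ∑_{i=1}^N ν_i = N, and let b_1 ≥ b_2 ≥ ⋯ ≥ b_k ≥ 1 be integers with b_1 + ⋯ + b_k = m. Then, as an inequality of real numbers, the sum over all tuples (i_1,…,i_k) of pairwise distinct indices in {1,…,N} of ∏_{l=1}^k (ν_{i_l})_{b_l} is at most ∑_{i=1}^N (ν_i)_2 · { (m−2) ν_i N^{m−3} + C(m−2, 2) · N^{m−4} · ∑_{j≠i} ν_j² }, where C(·,·) denotes the binomial coefficient. -/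
/-!
Dropping the distinctness of the indices bounds the sum by `∏_l S_{b_l}`, where
`S_b = ∑_i (ν_i)_b`, and `(n)_{a+j} ≤ (n)_a N^j` for `n ≤ N` gives `S_b ≤ N^b` for `b ≥ 1`.
Since `k ≤ m - 2`, some part is at least `2`. If it is the only one, it is at least `3` and
`S_{b_l} ≤ ∑_i (ν_i)_2 ν_i N^{b_l - 3}`, which feeds the first term of the bound. If two parts
`a, c` are at least `2`, the diagonal of `S_a S_c = ∑_{i,j} (ν_i)_a (ν_j)_c` is at most
`∑_i (ν_i)_2 ν_i N^{a+c-3}` and feeds the first term, its off-diagonal part the second.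
-/

open Finset

noncomputable def fallingFact (x : ℝ) (b : ℕ) : ℝ := ∏ j ∈ Finset.range b, (x - j)

theorem fallingFact_natCast (n b : ℕ) : fallingFact n b = n.descFactorial b := by
  rw [fallingFact, ← descPochhammer_eval_eq_prod_range, descPochhammer_eval_eq_descFactorial]

theorem Nat.descFactorial_le_mul_pow_sub {n N a b : ℕ} (hn : n ≤ N) (hab : a ≤ b) :
    n.descFactorial b ≤ n.descFactorial a * N ^ (b - a) := by
  rw [← Nat.descFactorial_mul_descFactorial hab, mul_comm]
  gcongr
  exact (Nat.descFactorial_le_pow _ _).trans (Nat.pow_le_pow_left ((n.sub_le a).trans hn) _)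

theorem Finset.sum_prod_le_prod_sum {κ α R : Type*} [Fintype κ] [DecidableEq κ] [Fintype α]
    [CommSemiring R] [PartialOrder R] [IsOrderedRing R] (s : Finset (κ → α)) (f : κ → α → R)
    (hf : 0 ≤ f) : ∑ i ∈ s, ∏ l, f l (i l) ≤ ∏ l, ∑ x, f l x := by
  rw [Fintype.prod_sum]
  exact sum_le_univ_sum_of_nonneg fun i => prod_nonneg fun l _ => hf l (i l)

section Moments

variable {ι : Type*} [Fintype ι] {ν : ι → ℕ} {N : ℕ}

theorem le_of_sum_eq (hsum : ∑ x, ν x = N) (x : ι) : ν x ≤ N :=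
  hsum ▸ single_le_sum (fun _ _ => Nat.zero_le _) (mem_univ x)

theorem sum_descFactorial_le_pow (hsum : ∑ x, ν x = N) {b : ℕ} (hb : 1 ≤ b) :
    ∑ x, (ν x).descFactorial b ≤ N ^ b := by
  calc ∑ x, (ν x).descFactorial b ≤ ∑ x, ν x * N ^ (b - 1) := by
        gcongr with x
        simpa using Nat.descFactorial_le_mul_pow_sub (le_of_sum_eq hsum x) hb
    _ = N ^ b := by rw [← sum_mul, hsum, ← pow_succ', Nat.sub_add_cancel hb]

theorem sum_descFactorial_le_of_three_le (hsum : ∑ x, ν x = N) {b : ℕ} (hb : 3 ≤ b) :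
    ∑ x, (ν x).descFactorial b ≤ ∑ x, (ν x).descFactorial 2 * ν x * N ^ (b - 3) := by
  gcongr with x
  calc (ν x).descFactorial b ≤ (ν x).descFactorial 3 * N ^ (b - 3) :=
        Nat.descFactorial_le_mul_pow_sub (le_of_sum_eq hsum x) hb
    _ = (ν x - 2) * (ν x).descFactorial 2 * N ^ (b - 3) := by rw [Nat.descFactorial_succ]
    _ ≤ (ν x).descFactorial 2 * ν x * N ^ (b - 3) := by
        rw [mul_comm (ν x - 2)]
        gcongr
        exact Nat.sub_le _ _

variable {κ : Type*} {b : κ → ℕ}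

theorem prod_sum_descFactorial_le_pow (hsum : ∑ x, ν x = N) (s : Finset κ)
    (hb : ∀ l ∈ s, 1 ≤ b l) : ∏ l ∈ s, ∑ x, (ν x).descFactorial (b l) ≤ N ^ ∑ l ∈ s, b l := by
  rw [← prod_pow_eq_pow_sum]
  exact prod_le_prod' fun l hl => sum_descFactorial_le_pow hsum (hb l hl)

variable [Fintype κ] [DecidableEq κ]

theorem prod_sum_descFactorial_le_of_three_le (hsum : ∑ x, ν x = N) (hb : ∀ l, 1 ≤ b l)
    {l₀ : κ} (h₀ : 3 ≤ b l₀) :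
    ∏ l, ∑ x, (ν x).descFactorial (b l) ≤
      ∑ x, (ν x).descFactorial 2 * ν x * N ^ (∑ l, b l - 3) := by
  rw [← mul_prod_erase _ _ (mem_univ l₀), ← add_sum_erase _ _ (mem_univ l₀)]
  calc _ ≤ (∑ x, (ν x).descFactorial 2 * ν x * N ^ (b l₀ - 3)) *
          N ^ ∑ l ∈ univ.erase l₀, b l :=
        Nat.mul_le_mul (sum_descFactorial_le_of_three_le hsum h₀)
          (prod_sum_descFactorial_le_pow hsum _ fun l _ => hb l)
    _ = _ := by
      rw [sum_mul]
      congr! 1 with x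
      rw [mul_assoc, ← pow_add, Nat.sub_add_comm h₀]

variable [DecidableEq ι]

theorem sum_descFactorial_mul_sum_descFactorial_le (hsum : ∑ x, ν x = N) {a c : ℕ}
    (ha : 2 ≤ a) (hc : 2 ≤ c) :
    (∑ x, (ν x).descFactorial a) * ∑ y, (ν y).descFactorial c ≤
      ∑ x, (ν x).descFactorial 2 *
        (ν x * N ^ (a + c - 3) + N ^ (a + c - 4) * ∑ y ∈ univ.erase x, ν y ^ 2) := by
  rw [sum_mul_sum]
  gcongr with x
  have hfirst : (ν x).descFactorial a ≤ (ν x).descFactorial 2 * N ^ (a - 2) :=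
    Nat.descFactorial_le_mul_pow_sub (le_of_sum_eq hsum x) ha
  rw [← add_sum_erase _ _ (mem_univ x), mul_add, mul_sum, mul_sum]
  refine add_le_add ?_ (sum_le_sum fun y _ => ?_)
  · have hdiag : (ν x).descFactorial c ≤ ν x * N ^ (c - 1) := by
      simpa using Nat.descFactorial_le_mul_pow_sub (a := 1) (le_of_sum_eq hsum x) (by omega)
    calc (ν x).descFactorial a * (ν x).descFactorial c
        ≤ (ν x).descFactorial 2 * N ^ (a - 2) * (ν x * N ^ (c - 1)) := by gcongr
      _ = (ν x).descFactorial 2 * (ν x * N ^ (a + c - 3)) := by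
        rw [show a + c - 3 = a - 2 + (c - 1) by omega, pow_add]
        ring
  · have hoff : (ν y).descFactorial c ≤ ν y ^ 2 * N ^ (c - 2) :=
      (Nat.descFactorial_le_mul_pow_sub (le_of_sum_eq hsum y) hc).trans
        (by gcongr; exact Nat.descFactorial_le_pow _ _)
    calc (ν x).descFactorial a * (ν y).descFactorial c
        ≤ (ν x).descFactorial 2 * N ^ (a - 2) * (ν y ^ 2 * N ^ (c - 2)) := by gcongr
      _ = (ν x).descFactorial 2 * (N ^ (a + c - 4) * ν y ^ 2) := by
        rw [show a + c - 4 = a - 2 + (c - 2) by omega, pow_add]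
        ring

theorem prod_sum_descFactorial_le_of_ne (hsum : ∑ x, ν x = N) (hb : ∀ l, 1 ≤ b l)
    {l₀ l₁ : κ} (hne : l₁ ≠ l₀) (h₀ : 2 ≤ b l₀) (h₁ : 2 ≤ b l₁) :
    ∏ l, ∑ x, (ν x).descFactorial (b l) ≤
      ∑ x, (ν x).descFactorial 2 *
        (ν x * N ^ (∑ l, b l - 3) + N ^ (∑ l, b l - 4) * ∑ y ∈ univ.erase x, ν y ^ 2) := by
  have h₁mem : l₁ ∈ univ.erase l₀ := mem_erase.2 ⟨hne, mem_univ l₁⟩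
  rw [← mul_prod_erase _ _ (mem_univ l₀), ← mul_prod_erase _ _ h₁mem, ← mul_assoc,
    ← add_sum_erase _ _ (mem_univ l₀), ← add_sum_erase _ _ h₁mem, ← add_assoc]
  calc _ ≤ (∑ x, (ν x).descFactorial 2 * (ν x * N ^ (b l₀ + b l₁ - 3) +
            N ^ (b l₀ + b l₁ - 4) * ∑ y ∈ univ.erase x, ν y ^ 2)) *
          N ^ ∑ l ∈ (univ.erase l₀).erase l₁, b l :=
        Nat.mul_le_mul (sum_descFactorial_mul_sum_descFactorial_le hsum h₀ h₁)
          (prod_sum_descFactorial_le_pow hsum _ fun l _ => hb l)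
    _ = _ := by
      rw [sum_mul]
      congr! 1 with x
      rw [Nat.sub_add_comm (by omega : 3 ≤ b l₀ + b l₁),
        Nat.sub_add_comm (by omega : 4 ≤ b l₀ + b l₁), pow_add, pow_add]
      ring

theorem prod_sum_descFactorial_le (hsum : ∑ x, ν x = N) (hb : ∀ l, 1 ≤ b l) {m : ℕ}
    (hbsum : ∑ l, b l = m) (hcard : Fintype.card κ + 2 ≤ m) :
    ∏ l, ∑ x, (ν x).descFactorial (b l) ≤
      ∑ x, (ν x).descFactorial 2 * ((m - 2) * ν x * N ^ (m - 3) +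
        (m - 2).choose 2 * N ^ (m - 4) * ∑ y ∈ univ.erase x, ν y ^ 2) := by
  obtain ⟨l₀, h₀⟩ : ∃ l, 2 ≤ b l := by
    by_contra! h
    have : ∑ l, b l ≤ ∑ _l : κ, 1 := sum_le_sum fun l _ => Nat.le_of_lt_succ (h l)
    simp only [sum_const, card_univ, smul_eq_mul, mul_one] at this
    omega
  by_cases h : ∃ l₁, l₁ ≠ l₀ ∧ 2 ≤ b l₁
  · obtain ⟨l₁, hne, h₁⟩ := h
    have hm : 4 ≤ m := by have := Fintype.one_lt_card_iff.2 ⟨l₀, l₁, hne.symm⟩; omega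
    refine (hbsum ▸ prod_sum_descFactorial_le_of_ne hsum hb hne h₀ h₁).trans
      (sum_le_sum fun x _ => ?_)
    gcongr (ν x).descFactorial 2 * (?_ * _ + ?_ * _)
    · exact Nat.le_mul_of_pos_left _ (by omega)
    · exact Nat.le_mul_of_pos_left _ (Nat.choose_pos (by omega))
  · push Not at h
    have h₀ : 3 ≤ b l₀ := by
      have hrest : ∑ l ∈ univ.erase l₀, b l = Fintype.card κ - 1 := by
        rw [sum_congr rfl fun l hl =>
          le_antisymm (Nat.le_of_lt_succ (h l (ne_of_mem_erase hl))) (hb l)]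
        simp [card_erase_of_mem]
      have := add_sum_erase _ b (mem_univ l₀)
      have := Fintype.card_pos_iff.2 ⟨l₀⟩
      omega
    refine (hbsum ▸ prod_sum_descFactorial_le_of_three_le hsum hb h₀).trans
      (sum_le_sum fun x _ => ?_)
    have hm : 3 ≤ m := hbsum ▸ h₀.trans (single_le_sum (fun _ _ => Nat.zero_le _) (mem_univ l₀))
    rw [mul_assoc]
    gcongr
    refine Nat.le_add_right_of_le ?_
    rw [mul_assoc]
    exact Nat.le_mul_of_pos_left _ (by omega)

end Moments

theorem multiple_merger_sum_le_general (N m k : ℕ) (hm : 3 ≤ m)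
    (hk2 : k ≤ m - 2)
    (ν : Fin N → ℕ) (hsum : ∑ i, ν i = N)
    (b : Fin k → ℕ)
    (hb1 : ∀ l, 1 ≤ b l) (hbsum : ∑ l, b l = m) :
    ∑ i ∈ Finset.univ.filter (fun i : Fin k → Fin N => Function.Injective i),
        ∏ l, fallingFact (ν (i l) : ℝ) (b l) ≤
      ∑ i : Fin N, (ν i : ℝ) * ((ν i : ℝ) - 1) *
        (((m : ℝ) - 2) * (ν i : ℝ) * (N : ℝ) ^ ((m : ℤ) - 3) +
          ((m - 2).choose 2 : ℝ) * (N : ℝ) ^ ((m : ℤ) - 4) *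
            ∑ j ∈ Finset.univ.erase i, (ν j : ℝ) ^ 2) := by
  have hbound := (sum_prod_le_prod_sum (univ.filter fun i : Fin k → Fin N => Function.Injective i)
      (fun l x => (ν x).descFactorial (b l)) fun _ _ => Nat.zero_le _).trans
    (prod_sum_descFactorial_le hsum hb1 hbsum (by simp only [Fintype.card_fin]; omega))
  have hm2 : (m : ℝ) - 2 = ((m - 2 : ℕ) : ℝ) := by push_cast [Nat.cast_sub (by omega : 2 ≤ m)]; ring
  have hpow3 : (N : ℝ) ^ ((m : ℤ) - 3) = (N : ℝ) ^ (m - 3) := by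
    rw [← zpow_natCast, Nat.cast_sub hm]; norm_num
  have hpow4 : ((m - 2).choose 2 : ℝ) * (N : ℝ) ^ ((m : ℤ) - 4) =
      ((m - 2).choose 2 : ℝ) * (N : ℝ) ^ (m - 4) := by
    rcases hm.eq_or_lt with rfl | hm4
    · simp
    · rw [← zpow_natCast, Nat.cast_sub hm4]; norm_num
  simp only [fallingFact_natCast, hm2, hpow3, hpow4, ← Nat.cast_descFactorial_two]
  exact_mod_cast hbound

/-- Combinatorial bound controlling multiple-merger configurations:
for merger sizes `b_1 ≥ ⋯ ≥ b_k ≥ 1` summing to `m` with `1 ≤ k ≤ m-2`, the sum over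
pairwise distinct index tuples of `∏_l (ν_{i_l})_{b_l}` is at most
`∑_i (ν_i)_2 {(m-2) ν_i N^{m-3} + C(m-2,2) N^{m-4} ∑_{j≠i} ν_j²}`. -/
theorem multiple_merger_sum_le (N m k : ℕ) (hN : 1 ≤ N) (hm : 3 ≤ m)
    (hk1 : 1 ≤ k) (hk2 : k ≤ m - 2)
    (ν : Fin N → ℕ) (hsum : ∑ i, ν i = N)
    (b : Fin k → ℕ) (hmono : ∀ l l' : Fin k, l ≤ l' → b l' ≤ b l)
    (hb1 : ∀ l, 1 ≤ b l) (hbsum : ∑ l, b l = m) :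
    ∑ i ∈ Finset.univ.filter (fun i : Fin k → Fin N => Function.Injective i),
        ∏ l, fallingFact (ν (i l) : ℝ) (b l) ≤
      ∑ i : Fin N, (ν i : ℝ) * ((ν i : ℝ) - 1) *
        (((m : ℝ) - 2) * (ν i : ℝ) * (N : ℝ) ^ ((m : ℤ) - 3) +
          ((m - 2).choose 2 : ℝ) * (N : ℝ) ^ ((m : ℤ) - 4) *
            ∑ j ∈ Finset.univ.erase i, (ν j : ℝ) ^ 2) :=
  multiple_merger_sum_le_general N m k hm hk2 ν hsum b hb1 hbsum
end

section
/- For every integer N ≥ 1 and every real w ∈ [0,1], writing m = ⌊Nw⌋, we have N(N−1)w² ≥ m·(2(Nw − m) + m − 1). -/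
/-- For every integer `N ≥ 1` and `w ∈ [0,1]`, with `m = ⌊Nw⌋`,
`N(N-1)w² ≥ m (2(Nw - m) + m - 1)`: the second falling factorial moment of a
`Binomial(N, w)` variable dominates that of a stochastic rounding of `Nw`. -/
theorem binomial_second_moment_ge_rounding (N : ℕ) (hN : 1 ≤ N) (w : ℝ)
    (hw0 : 0 ≤ w) (hw1 : w ≤ 1) :
    (⌊(N : ℝ) * w⌋₊ : ℝ) *
        (2 * ((N : ℝ) * w - ⌊(N : ℝ) * w⌋₊) + (⌊(N : ℝ) * w⌋₊ : ℝ) - 1) ≤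
      (N : ℝ) * ((N : ℝ) - 1) * w ^ 2 := by
  rcases Nat.lt_or_ge N 2 with hN2 | hN2
  · -- N = 1
    have hN1 : N = 1 := by omega
    subst hN1
    rcases eq_or_lt_of_le hw1 with hw | hw
    · subst hw; norm_num
    · have h0 : ⌊((1:ℕ) : ℝ) * w⌋₊ = 0 := by
        have h1 : ((1:ℕ) : ℝ) * w = w := by push_cast; ring
        rw [h1]
        exact Nat.floor_eq_zero.2 hw
      rw [h0]; norm_num
  · set m : ℝ := (⌊(N : ℝ) * w⌋₊ : ℝ) with hm
    have hN2' : (2:ℝ) ≤ N := by exact_mod_cast hN2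
    have hx0 : 0 ≤ (N:ℝ) * w := by positivity
    have h1 : m ≤ (N:ℝ) * w := Nat.floor_le hx0
    have h2 : (N:ℝ) * w < m + 1 := Nat.lt_floor_add_one _
    have h3 : 0 ≤ m := Nat.cast_nonneg _
    have h4 : (N:ℝ) * w ≤ N := by nlinarith
    rcases le_or_gt m ((N:ℝ) - 1) with hc | hc
    · have hk : m ≤ ((N:ℝ) - 1) * ((N:ℝ) - m) := by nlinarith
      nlinarith [sq_nonneg (((N:ℝ)-1) * ((N:ℝ)*w - m) - m), mul_nonneg h3 (sub_nonneg.2 hk),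
        mul_pos (show (0:ℝ) < N by linarith) (show (0:ℝ) < (N:ℝ) - 1 by linarith)]
    · -- m > N-1, so m = N, w = 1
      have hmN : (N:ℝ) ≤ m := by
        by_contra h
        push_neg at h
        have hlt : ⌊(N : ℝ) * w⌋₊ < N := by rw [hm] at h; exact_mod_cast h
        have hle : ⌊(N : ℝ) * w⌋₊ ≤ N - 1 := by omega
        have h' : m ≤ ((N - 1 : ℕ) : ℝ) := by rw [hm]; exact_mod_cast hle
        rw [Nat.cast_sub hN] at h'
        exact absurd h' (not_le.2 (by simpa using hc))
      have hxN : (N:ℝ) * w = N := le_antisymm h4 (le_trans hmN h1)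
      have hNpos : (0:ℝ) < N := by linarith
      have hw : w = 1 := by field_simp at hxN; exact hxN
      subst hw
      have hmval : m = N := le_antisymm (by simpa using h1) hmN
      rw [hmval]; ring_nf
      exact le_refl _
end

section
/- Let N ≥ 1 be an integer and w ∈ [0,1] a real. Let X be a random variable with the Binomial(N, w) distribution and let Y be a stochastic rounding of Nw. Then E[X(X−1)] ≥ E[Y(Y−1)]. -/
/-!
With `x = N w`, both variables have mean `x`, so `E[Z(Z-1)] = x² - x + Var Z` for each of them.
The binomial variance is `N w (1 - w)`, while a stochastic rounding of `x` is `⌊x⌋` plus a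
Bernoulli variable with parameter `f = x - ⌊x⌋`, of variance `f (1 - f)`. Comparing the two:
if `f ≤ w` then `f (1 - f) ≤ w (1 - f) ≤ w N (1 - w)`, because `⌊x⌋ + 1 ≤ N` unless `f = 0`;
if `w ≤ f` then `f (1 - f) ≤ f (1 - w) ≤ N w (1 - w)`, because `f ≤ x`.
-/

open MeasureTheory

/-- `Y` is a stochastic rounding of the nonnegative real `x`: an ℕ-valued random
variable taking the value `⌊x⌋` with probability `1 - x + ⌊x⌋` and the value `⌊x⌋ + 1`
with probability `x - ⌊x⌋`. -/
def IsStochasticRounding {Ω : Type*} [MeasurableSpace Ω] (P : Measure Ω)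
    (x : ℝ) (Y : Ω → ℕ) : Prop :=
  Measurable Y ∧
    P {ω | Y ω = ⌊x⌋₊} = ENNReal.ofReal (1 - x + ⌊x⌋₊) ∧
    P {ω | Y ω = ⌊x⌋₊ + 1} = ENNReal.ofReal (x - ⌊x⌋₊)

open Polynomial

section DiscreteIntegral

variable {Ω α : Type*} [MeasurableSpace Ω] [MeasurableSpace α] [MeasurableSingletonClass α]
  {P : Measure Ω} {X : Ω → α}

theorem ae_mem_of_sum_measure_eq_one [IsProbabilityMeasure P] (hX : Measurable X)
    {S : Finset α} (hS : ∑ a ∈ S, P {ω | X ω = a} = 1) : ∀ᵐ ω ∂P, X ω ∈ S := by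
  change ∀ᵐ ω ∂P, ω ∈ X ⁻¹' S
  rw [ae_mem_iff_measure_eq (hX S.measurableSet).nullMeasurableSet, measure_univ, ← hS]
  exact (sum_measure_preimage_singleton S fun a _ => hX (measurableSet_singleton a)).symm

theorem integral_comp_eq_sum_of_ae_mem {E : Type*} [Countable α] [NormedAddCommGroup E]
    [NormedSpace ℝ E] [CompleteSpace E] [IsFiniteMeasure P] (hX : Measurable X) {S : Finset α}
    (hS : ∀ᵐ ω ∂P, X ω ∈ S) (g : α → E) :
    ∫ ω, g (X ω) ∂P = ∑ a ∈ S, P.real {ω | X ω = a} • g a := by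
  have hS_map : ∀ᵐ a ∂P.map X, a ∈ (S : Set α) :=
    (ae_map_iff hX.aemeasurable S.measurableSet).mpr hS
  rw [← integral_map hX.aemeasurable AEStronglyMeasurable.of_discrete,
    ← Measure.restrict_eq_self_of_ae_mem hS_map, setIntegral_finset _ IntegrableOn.finset]
  simp only [map_measureReal_apply hX (measurableSet_singleton _)]
  rfl

end DiscreteIntegral

theorem bernsteinPolynomial_eval {R : Type*} [CommRing R] (n ν : ℕ) (x : R) :
    (bernsteinPolynomial R n ν).eval x = n.choose ν * x ^ ν * (1 - x) ^ (n - ν) := by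
  simp [bernsteinPolynomial]

theorem Nat.cast_mul_sub_one {R : Type*} [Ring R] (n : ℕ) :
    ((n * (n - 1) : ℕ) : R) = n * (n - 1) := by
  cases n <;> simp

theorem sum_bernsteinPolynomial_eval (n : ℕ) (x : ℝ) :
    ∑ k ∈ Finset.range (n + 1), (n.choose k : ℝ) * x ^ k * (1 - x) ^ (n - k) = 1 := by
  simpa only [eval_finsetSum, bernsteinPolynomial_eval, eval_one] using
    congrArg (eval x) (bernsteinPolynomial.sum ℝ n)

theorem sum_mul_sub_one_mul_bernsteinPolynomial_eval (n : ℕ) (x : ℝ) :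
    ∑ k ∈ Finset.range (n + 1),
        (k : ℝ) * (k - 1) * ((n.choose k : ℝ) * x ^ k * (1 - x) ^ (n - k)) =
      n * (n - 1) * x ^ 2 := by
  simpa only [eval_finsetSum, eval_smul, nsmul_eq_mul, Nat.cast_mul_sub_one, eval_mul, eval_sub,
    eval_natCast, eval_one, eval_pow, eval_X, bernsteinPolynomial_eval] using
    congrArg (eval x) (bernsteinPolynomial.sum_mul_smul ℝ n)

section FactorialMoments

variable {Ω : Type*} [MeasurableSpace Ω] {P : Measure Ω} [IsProbabilityMeasure P]

theorem integral_mul_sub_one_of_binomial {N : ℕ} {w : ℝ} (hw0 : 0 ≤ w) (hw1 : w ≤ 1)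
    {X : Ω → ℕ} (hXmeas : Measurable X)
    (hX : ∀ k : ℕ, P {ω | X ω = k} =
      ENNReal.ofReal ((N.choose k : ℝ) * w ^ k * (1 - w) ^ (N - k))) :
    ∫ ω, (X ω : ℝ) * ((X ω : ℝ) - 1) ∂P = N * (N - 1) * w ^ 2 := by
  have hpmf_nonneg (k : ℕ) : 0 ≤ (N.choose k : ℝ) * w ^ k * (1 - w) ^ (N - k) := by
    have : 0 ≤ 1 - w := by linarith
    positivity
  have hpmf (k : ℕ) : P.real {ω | X ω = k} = (N.choose k : ℝ) * w ^ k * (1 - w) ^ (N - k) := by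
    rw [measureReal_def, hX, ENNReal.toReal_ofReal (hpmf_nonneg k)]
  have hsum : ∑ k ∈ Finset.range (N + 1), P {ω | X ω = k} = 1 := by
    simp_rw [hX]
    rw [← ENNReal.ofReal_sum_of_nonneg fun k _ => hpmf_nonneg k, sum_bernsteinPolynomial_eval,
      ENNReal.ofReal_one]
  rw [integral_comp_eq_sum_of_ae_mem hXmeas (ae_mem_of_sum_measure_eq_one hXmeas hsum)
    fun k : ℕ => (k : ℝ) * (k - 1), ← sum_mul_sub_one_mul_bernsteinPolynomial_eval]
  simp only [hpmf, smul_eq_mul, mul_comm]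

theorem IsStochasticRounding.integral_mul_sub_one {x : ℝ} (hx : 0 ≤ x) {Y : Ω → ℕ}
    (hY : IsStochasticRounding P x Y) :
    ∫ ω, (Y ω : ℝ) * ((Y ω : ℝ) - 1) ∂P =
      x * (x - 1) + (x - ⌊x⌋₊) * (1 - (x - ⌊x⌋₊)) := by
  obtain ⟨hYmeas, hfloor, hceil⟩ := hY
  have hf0 : 0 ≤ x - ⌊x⌋₊ := sub_nonneg.mpr (Nat.floor_le hx)
  have hf1 : 0 ≤ 1 - x + ⌊x⌋₊ := by linarith [Nat.lt_floor_add_one x]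
  have hne : ⌊x⌋₊ ≠ ⌊x⌋₊ + 1 := Nat.ne_add_one _
  have hsum : ∑ k ∈ {⌊x⌋₊, ⌊x⌋₊ + 1}, P {ω | Y ω = k} = 1 := by
    rw [Finset.sum_pair hne, hfloor, hceil, ← ENNReal.ofReal_add hf1 hf0]
    norm_num
  rw [integral_comp_eq_sum_of_ae_mem hYmeas (ae_mem_of_sum_measure_eq_one hYmeas hsum)
    fun k : ℕ => (k : ℝ) * (k - 1), Finset.sum_pair hne, measureReal_def, measureReal_def,
    hfloor, hceil, ENNReal.toReal_ofReal hf1, ENNReal.toReal_ofReal hf0]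
  push_cast
  ring

end FactorialMoments

theorem sub_floor_mul_one_sub_le (N : ℕ) {w : ℝ} (hw0 : 0 ≤ w) (hw1 : w ≤ 1) :
    (N * w - ⌊N * w⌋₊) * (1 - (N * w - ⌊N * w⌋₊)) ≤ N * w * (1 - w) := by
  set m := ⌊(N : ℝ) * w⌋₊
  set f := (N : ℝ) * w - m
  have hx : 0 ≤ (N : ℝ) * w := by positivity
  have hf0 : 0 ≤ f := sub_nonneg.mpr (Nat.floor_le hx)
  have hf1 : f < 1 := by linarith [Nat.lt_floor_add_one ((N : ℝ) * w)]
  have hfx : f ≤ N * w := by linarith [(Nat.cast_nonneg m : (0 : ℝ) ≤ m)]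
  rcases le_total f w with hfw | hwf
  · rcases hf0.eq_or_lt with hf_zero | hf_pos
    · rw [← hf_zero]
      nlinarith
    · have hmN : (m : ℝ) + 1 ≤ N := by
        have : m < N := by exact_mod_cast (show (m : ℝ) < N by nlinarith)
        exact_mod_cast this
      nlinarith [mul_le_mul_of_nonneg_right hfw (by linarith : 0 ≤ 1 - f)]
  · nlinarith [mul_le_mul_of_nonneg_left hwf hf0]

theorem binomial_pair_rate_dominates_stochastic_rounding_general
    {Ω₁ Ω₂ : Type*} [MeasurableSpace Ω₁] [MeasurableSpace Ω₂]
    (P₁ : Measure Ω₁) [IsProbabilityMeasure P₁]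
    (P₂ : Measure Ω₂) [IsProbabilityMeasure P₂]
    (N : ℕ) (w : ℝ) (hw0 : 0 ≤ w) (hw1 : w ≤ 1)
    (X : Ω₁ → ℕ) (hXmeas : Measurable X)
    (hX : ∀ k : ℕ, P₁ {ω | X ω = k} =
      ENNReal.ofReal ((N.choose k : ℝ) * w ^ k * (1 - w) ^ (N - k)))
    (Y : Ω₂ → ℕ) (hY : IsStochasticRounding P₂ ((N : ℝ) * w) Y) :
    (∫ ω, (Y ω : ℝ) * ((Y ω : ℝ) - 1) ∂P₂) ≤
      ∫ ω, (X ω : ℝ) * ((X ω : ℝ) - 1) ∂P₁ := by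
  rw [hY.integral_mul_sub_one (by positivity),
    integral_mul_sub_one_of_binomial hw0 hw1 hXmeas hX]
  linear_combination sub_floor_mul_one_sub_le N hw0 hw1

/-- **Proposition of Appendix A.** If `X` has the `Binomial(N, w)`
distribution and `Y` is a stochastic rounding of `Nw`, then
`E[X(X-1)] ≥ E[Y(Y-1)]`. -/
theorem binomial_pair_rate_dominates_stochastic_rounding
    {Ω₁ Ω₂ : Type*} [MeasurableSpace Ω₁] [MeasurableSpace Ω₂]
    (P₁ : Measure Ω₁) [IsProbabilityMeasure P₁]
    (P₂ : Measure Ω₂) [IsProbabilityMeasure P₂]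
    (N : ℕ) (hN : 1 ≤ N) (w : ℝ) (hw0 : 0 ≤ w) (hw1 : w ≤ 1)
    (X : Ω₁ → ℕ) (hXmeas : Measurable X)
    (hX : ∀ k : ℕ, P₁ {ω | X ω = k} =
      ENNReal.ofReal ((N.choose k : ℝ) * w ^ k * (1 - w) ^ (N - k)))
    (Y : Ω₂ → ℕ) (hY : IsStochasticRounding P₂ ((N : ℝ) * w) Y) :
    (∫ ω, (Y ω : ℝ) * ((Y ω : ℝ) - 1) ∂P₂) ≤
      ∫ ω, (X ω : ℝ) * ((X ω : ℝ) - 1) ∂P₁ :=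
  binomial_pair_rate_dominates_stochastic_rounding_general P₁ P₂ N w hw0 hw1 X hXmeas hX Y hY
end
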